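/- arXiv:1410.4361 — 3 statements merged into one kernel-verified Lean document; each statement's English description precedes it below -/
import Mathlib

section
/- For all integers k and t with 2 ≤ k ≤ t, the maximum number of edges among the bicliques (complete bipartite subgraphs) of the Kneser graph KG(2t,k) equals C(t,k)², i.e., B(KG(2t,k)) = C(t,k)². -/
/-!
If `X, Y` span a biclique of the Kneser graph, the unions `S` of the members of `X` and `T` of
the members of `Y` are disjoint, so `|X| |Y| ≤ C(|S|, k) C(|T|, k)` with `|S| + |T| ≤ 2t`.
Since `n ↦ C(n, k)` is log-concave, balancing `|S|` and `|T|` only increases this product, which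
is therefore at most `C(t, k)²`. The `k`-subsets of two complementary `t`-sets attain the bound.
-/

open Finset

namespace Nat

theorem choose_mul_choose_succ_le (k : ℕ) {a b : ℕ} (hab : a ≤ b) :
    a.choose k * (b + 1).choose k ≤ (a + 1).choose k * b.choose k := by
  rcases lt_or_ge a k with hak | hka
  · simp [choose_eq_zero_of_lt hak]
  have hratio : (a + 1 - k) * (b + 1) ≤ (a + 1) * (b + 1 - k) := by
    obtain ⟨p, hp⟩ : ∃ p, a + 1 = p + k := ⟨a + 1 - k, by omega⟩
    obtain ⟨q, hq⟩ : ∃ q, b + 1 = q + k := ⟨b + 1 - k, by omega⟩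
    rw [hp, hq, Nat.add_sub_cancel, Nat.add_sub_cancel]
    nlinarith
  refine Nat.le_of_mul_le_mul_right ?_ (Nat.mul_pos a.succ_pos (by omega : 0 < b + 1 - k))
  calc a.choose k * (b + 1).choose k * ((a + 1) * (b + 1 - k))
      = a.choose k * (a + 1) * ((b + 1).choose k * (b + 1 - k)) := by ring
    _ = (a + 1).choose k * (a + 1 - k) * (b.choose k * (b + 1)) := by
      rw [choose_mul_succ_eq, choose_mul_succ_eq]
    _ = (a + 1).choose k * b.choose k * ((a + 1 - k) * (b + 1)) := by ring
    _ ≤ (a + 1).choose k * b.choose k * ((a + 1) * (b + 1 - k)) :=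
      Nat.mul_le_mul_left _ hratio

theorem choose_mul_choose_two_mul_sub_le_sq (k : ℕ) {a t : ℕ} (hat : a ≤ t) :
    a.choose k * (2 * t - a).choose k ≤ t.choose k ^ 2 := by
  induction hat using Nat.decreasingInduction with
  | self => rw [two_mul, Nat.add_sub_cancel, sq]
  | of_succ a hat ih =>
    calc a.choose k * (2 * t - a).choose k
        = a.choose k * (2 * t - (a + 1) + 1).choose k := by
          rw [show 2 * t - (a + 1) + 1 = 2 * t - a by omega]
      _ ≤ (a + 1).choose k * (2 * t - (a + 1)).choose k := choose_mul_choose_succ_le k (by omega)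
      _ ≤ t.choose k ^ 2 := ih

theorem choose_mul_choose_le_sq (k : ℕ) {a b t : ℕ} (habt : a + b ≤ 2 * t) :
    a.choose k * b.choose k ≤ t.choose k ^ 2 := by
  wlog hab : a ≤ b generalizing a b
  · rw [mul_comm]
    exact this (by omega) (by omega)
  calc a.choose k * b.choose k ≤ a.choose k * (2 * t - a).choose k :=
        Nat.mul_le_mul_left _ (choose_le_choose k (by omega))
    _ ≤ t.choose k ^ 2 := choose_mul_choose_two_mul_sub_le_sq k (by omega)

end Nat

section KneserBiclique

variable {α : Type*} {k : ℕ}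

theorem card_le_choose_of_forall_subset {X : Finset {A : Finset α // A.card = k}} {S : Finset α}
    (hX : ∀ a ∈ X, a.1 ⊆ S) : X.card ≤ S.card.choose k := by
  rw [← card_powersetCard]
  exact card_le_card_of_injOn Subtype.val (fun a ha => mem_powersetCard.2 ⟨hX a ha, a.2⟩)
    Subtype.val_injective.injOn

theorem disjoint_of_forall_disjoint_val (hk : k ≠ 0) {X Y : Finset {A : Finset α // A.card = k}}
    (hXY : ∀ a ∈ X, ∀ b ∈ Y, Disjoint a.1 b.1) : Disjoint X Y :=
  disjoint_left.2 fun a ha hb => hk (a.2 ▸ card_eq_zero.2 (disjoint_self.1 (hXY a ha a hb)))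

theorem card_mul_card_le_choose_sq [Fintype α] [DecidableEq α]
    {X Y : Finset {A : Finset α // A.card = k}} (hXY : ∀ a ∈ X, ∀ b ∈ Y, Disjoint a.1 b.1)
    {t : ℕ} (ht : Fintype.card α ≤ 2 * t) : X.card * Y.card ≤ t.choose k ^ 2 := by
  set S := X.sup Subtype.val
  set T := Y.sup Subtype.val
  have hST : Disjoint S T :=
    Finset.disjoint_sup_left.2 fun a ha => Finset.disjoint_sup_right.2 fun b hb => hXY a ha b hb
  have hcard : S.card + T.card ≤ 2 * t :=
    (card_union_of_disjoint hST).symm.trans_le ((card_le_univ _).trans ht)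
  calc X.card * Y.card ≤ S.card.choose k * T.card.choose k :=
        Nat.mul_le_mul (card_le_choose_of_forall_subset fun _ ha => le_sup ha)
          (card_le_choose_of_forall_subset fun _ hb => le_sup hb)
    _ ≤ t.choose k ^ 2 := Nat.choose_mul_choose_le_sq k hcard

theorem card_subtype_powersetCard (S : Finset α) :
    ((S.powersetCard k).subtype (·.card = k)).card = S.card.choose k := by
  rw [card_subtype, filter_true_of_mem fun A hA => (mem_powersetCard.1 hA).2, card_powersetCard]

theorem exists_forall_disjoint_val_card_mul_card_eq {S T : Finset α} (hST : Disjoint S T) :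
    ∃ X Y : Finset {A : Finset α // A.card = k}, (∀ a ∈ X, ∀ b ∈ Y, Disjoint a.1 b.1) ∧
      X.card * Y.card = S.card.choose k * T.card.choose k := by
  refine ⟨(S.powersetCard k).subtype _, (T.powersetCard k).subtype _, fun a ha b hb => ?_,
    by rw [card_subtype_powersetCard, card_subtype_powersetCard]⟩
  rw [mem_subtype, mem_powersetCard] at ha hb
  exact hST.mono ha.1 hb.1

end KneserBiclique

theorem stmt_1_general (k t : ℕ) (hk : 2 ≤ k) :
    IsGreatest
      {m : ℕ | ∃ X Y : Finset {A : Finset (Fin (2 * t)) // A.card = k},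
        Disjoint X Y ∧ (∀ a ∈ X, ∀ b ∈ Y, Disjoint a.1 b.1) ∧
        m = X.card * Y.card}
      (Nat.choose t k ^ 2) := by
  constructor
  · obtain ⟨S, -, hS⟩ := exists_subset_card_eq (s := (univ : Finset (Fin (2 * t)))) (n := t)
      (by simp only [card_univ, Fintype.card_fin]; omega)
    have hSc : Sᶜ.card = t := by rw [card_compl, hS, Fintype.card_fin]; omega
    obtain ⟨X, Y, hXY, hcard⟩ :=
      exists_forall_disjoint_val_card_mul_card_eq (k := k) (disjoint_compl_right (a := S))
    exact ⟨X, Y, disjoint_of_forall_disjoint_val (by omega) hXY, hXY,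
      by rw [hcard, hS, hSc, sq]⟩
  · rintro m ⟨X, Y, -, hXY, rfl⟩
    exact card_mul_card_le_choose_sq hXY (Fintype.card_fin _).le

theorem stmt_1 (k t : ℕ) (hk : 2 ≤ k) (hkt : k ≤ t) :
    IsGreatest
      {m : ℕ | ∃ X Y : Finset {A : Finset (Fin (2 * t)) // A.card = k},
        Disjoint X Y ∧ (∀ a ∈ X, ∀ b ∈ Y, Disjoint a.1 b.1) ∧
        m = X.card * Y.card}
      (Nat.choose t k ^ 2) :=
  stmt_1_general k t hk
end

section
/- Let G₁, G₂, …, G_k be graphs such that for each i = 2,…,k there exists an injective graph homomorphism from G_i into G₁ (i.e., G₁ contains a subgraph isomorphic to G_i). Then the key pool number of the disjoint union satisfies N(G₁ ∪ G₂ ∪ ⋯ ∪ G_k) ≤ N(G₁) + k. -/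
/-- `A` is a `(w,d)`-covering of the graph `G`. -/
def IsCovering {V : Type*} [Fintype V] [DecidableEq V] (G : SimpleGraph V)
    (w d : ℕ) {n : ℕ} (A : Fin n → Finset V) : Prop :=
  ∀ u v : V, G.Adj u v → ∀ W : Finset V, W.card = w → u ∉ W → v ∉ W →
    d ≤ (Finset.univ.filter
      (fun j => u ∈ A j ∧ v ∈ A j ∧ Disjoint W (A j))).card

/-- `N(G,w;d)`: the minimum number of sets in a `(w,d)`-covering of `G`. -/
noncomputable def NGraphCov {V : Type*} [Fintype V] [DecidableEq V]
    (G : SimpleGraph V) (w d : ℕ) : ℕ :=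
  sInf {n : ℕ | ∃ A : Fin n → Finset V, IsCovering G w d A}

/-- The vertex-disjoint union of a family of graphs `G i`. -/
def disjointUnion {ι : Type*} {V : ι → Type*} (G : ∀ i, SimpleGraph (V i)) :
    SimpleGraph (Σ i, V i) where
  Adj x y := ∃ (i : ι) (u v : V i), (G i).Adj u v ∧ x = ⟨i, u⟩ ∧ y = ⟨i, v⟩
  symm := by
    constructor
    rintro x y ⟨i, u, v, h, rfl, rfl⟩
    exact ⟨i, v, u, h.symm, rfl, rfl⟩
  loopless := by
    constructor
    rintro x ⟨i, u, v, h, rfl, h2⟩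
    have : u = v := eq_of_heq (Sigma.mk.inj_iff.mp h2).2
    exact (G i).loopless.irrefl v (this ▸ h)

/-!
Pull an optimal covering of `G₁` back to every component along the injective homomorphisms
`Gᵢ → G₁`: this separates an edge from any vertex of its own component. A vertex of another
component is separated from the edge by the vertex set of the edge's component, which adds one
set per component.
-/

open Finset

section Covering

variable {V : Type*} [Fintype V] [DecidableEq V]

theorem isCovering_one_one_iff {G : SimpleGraph V} {n : ℕ} {A : Fin n → Finset V} :
    IsCovering G 1 1 A ↔
      ∀ u v, G.Adj u v → ∀ x, x ≠ u → x ≠ v → ∃ j, u ∈ A j ∧ v ∈ A j ∧ x ∉ A j := by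
  simp only [IsCovering, card_eq_one, Nat.one_le_iff_ne_zero, ← Nat.pos_iff_ne_zero, card_pos,
    filter_nonempty_iff, mem_univ, true_and]
  constructor
  · intro h u v huv x hxu hxv
    simpa using h u v huv {x} ⟨x, rfl⟩ (by simpa using hxu.symm) (by simpa using hxv.symm)
  · rintro h u v huv _ ⟨x, rfl⟩ hu hv
    simpa using h u v huv x (by simpa [eq_comm] using hu) (by simpa [eq_comm] using hv)

theorem exists_isCovering_one (G : SimpleGraph V) (w : ℕ) :
    ∃ n, ∃ A : Fin n → Finset V, IsCovering G w 1 A := by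
  refine ⟨_, fun j => (Fintype.equivFin (Finset V)).symm j, fun u v _ W _ hu hv => ?_⟩
  rw [Nat.one_le_iff_ne_zero, ← Nat.pos_iff_ne_zero, card_pos]
  refine ⟨Fintype.equivFin (Finset V) {u, v}, ?_⟩
  simp [disjoint_insert_right, hu, hv]

theorem exists_isCovering_nGraphCov (G : SimpleGraph V) (w : ℕ) :
    ∃ A : Fin (NGraphCov G w 1) → Finset V, IsCovering G w 1 A :=
  Nat.sInf_mem (exists_isCovering_one G w)

theorem nGraphCov_le_of_isCovering {G : SimpleGraph V} {w d n : ℕ} {A : Fin n → Finset V}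
    (hA : IsCovering G w d A) : NGraphCov G w d ≤ n :=
  Nat.sInf_le ⟨A, hA⟩

end Covering

theorem isCovering_disjointUnion {k : ℕ} {V : Fin k → Type*} [∀ i, Fintype (V i)]
    [∀ i, DecidableEq (V i)] {G : ∀ i, SimpleGraph (V i)} {W : Type*} [Fintype W]
    [DecidableEq W] {H : SimpleGraph W} {f : ∀ i, G i →g H} (hf : ∀ i, Function.Injective (f i))
    {n : ℕ} {A : Fin n → Finset W} (hA : IsCovering H 1 1 A) :
    IsCovering (disjointUnion G) 1 1
      (Fin.append (fun j => univ.filter fun x : Σ i, V i => f x.1 x.2 ∈ A j)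
        (fun i => univ.filter fun x : Σ i, V i => x.1 = i)) := by
  rw [isCovering_one_one_iff] at hA ⊢
  rintro _ _ ⟨i, a, b, hab, rfl, rfl⟩ ⟨i', c⟩ hca hcb
  by_cases hi : i' = i
  · subst hi
    obtain ⟨j, ha, hb, hc⟩ := hA (f i' a) (f i' b) ((f i').map_adj hab) (f i' c)
      ((hf i').ne fun h => hca (by rw [h])) ((hf i').ne fun h => hcb (by rw [h]))
    exact ⟨Fin.castAdd k j, by simpa using ha, by simpa using hb, by simpa using hc⟩
  · exact ⟨Fin.natAdd n i, by simp, by simp, by simpa using hi⟩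

theorem stmt_13 (k : ℕ) (hk : 1 ≤ k) (V : Fin k → Type*)
    [∀ i, Fintype (V i)] [∀ i, DecidableEq (V i)]
    (G : ∀ i, SimpleGraph (V i))
    (hhom : ∀ i : Fin k, ∃ f : G i →g G ⟨0, hk⟩, Function.Injective f) :
    NGraphCov (disjointUnion G) 1 1 ≤ NGraphCov (G ⟨0, hk⟩) 1 1 + k := by
  choose f hf using hhom
  obtain ⟨A, hA⟩ := exists_isCovering_nGraphCov (G ⟨0, hk⟩) 1
  exact nGraphCov_le_of_isCovering (isCovering_disjointUnion hf hA)
end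

section
/- For every integer n ≥ 3, the key pool number of the cycle C_n satisfies R(n) ≤ N(C_n) ≤ 2⌈log₂ n⌉ + 1, where R(n) = min{c ∈ ℕ : C(c,⌊c/2⌋) ≥ n}. -/
/-- `R(t)`: the smallest nonnegative integer `c` with `C(c,⌊c/2⌋) ≥ t`. -/
noncomputable def RSperner (t : ℕ) : ℕ :=
  sInf {c : ℕ | t ≤ Nat.choose c (c / 2)}

/-!
Lower bound: in a (1,1)-covering `A₁, …, Aₘ` the trace `{j | x ∈ Aⱼ}` of a vertex `x` is not
contained in the trace of another vertex `y`, since `x` has a neighbour `v ≠ y` (the minimum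
degree is 2) and some `Aⱼ` contains `x` and `v` but not `y`. So the `n` traces form an antichain
in the subsets of `{1, …, m}`, and Sperner's theorem gives `n ≤ C(m, ⌊m/2⌋)`.

Upper bound: label the vertex `v` of `Cₙ` by its Gray code, which has `k = ⌈log₂ n⌉` bits.
The labels of `v` and `v + 1` differ in exactly one bit, so any third vertex `x` differs from
both on a bit where they agree. Hence the `2k` sets "bit `j` of the label equals `b`" take care
of the path edges, and the single set `{0, n - 1}` of the closing edge.
-/

theorem Nat.exists_xor_succ_eq_two_pow_sub_one (u : ℕ) :
    ∃ t, u ^^^ (u + 1) = 2 ^ (t + 1) - 1 := by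
  induction u using Nat.binaryRec with
  | zero => exact ⟨0, rfl⟩
  | bit b m ih =>
    cases b
    · refine ⟨0, ?_⟩
      rw [show Nat.bit false m + 1 = Nat.bit true m by simp [Nat.bit_val], Nat.xor_bit,
        Nat.xor_self]
      rfl
    · obtain ⟨t, ht⟩ := ih
      refine ⟨t + 1, ?_⟩
      rw [show Nat.bit true m + 1 = Nat.bit false (m + 1) by simp [Nat.bit_val]; ring,
        Nat.xor_bit, ht, Nat.bit_val, pow_succ 2 (t + 1)]
      have := Nat.one_le_two_pow (n := t + 1)
      simp only [Bool.bne_false, Bool.toNat_true]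
      omega

theorem Nat.exists_testBit_eq_testBit_ne {a b c t : ℕ} (hab : a ^^^ b = 2 ^ t) (hca : c ≠ a)
    (hcb : c ≠ b) : ∃ j, a.testBit j = b.testBit j ∧ c.testBit j ≠ a.testBit j := by
  have hbit (j : ℕ) : (a.testBit j ^^ b.testBit j) = decide (t = j) := by
    simpa only [Nat.testBit_xor, Nat.testBit_two_pow] using congrArg (Nat.testBit · j) hab
  have hflip : a.testBit t ≠ b.testBit t := by simpa using hbit t
  have hsame (j : ℕ) (hj : j ≠ t) : a.testBit j = b.testBit j := by
    simpa [Ne.symm hj] using hbit j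
  by_contra! h
  by_cases ht : c.testBit t = a.testBit t
  · refine hca (Nat.eq_of_testBit_eq fun j => ?_)
    rcases eq_or_ne j t with rfl | hj
    exacts [ht, h j (hsame j hj)]
  · refine hcb (Nat.eq_of_testBit_eq fun j => ?_)
    rcases eq_or_ne j t with rfl | hj
    · revert ht hflip; cases c.testBit j <;> cases a.testBit j <;> cases b.testBit j <;> simp
    · rw [h j (hsame j hj), hsame j hj]

theorem Fin.val_eq_succ_or_wrap_of_val_sub_eq_one {n : ℕ} {u v : Fin n} (h : (v - u).val = 1) :
    (v : ℕ) = u + 1 ∨ ((u : ℕ) + 1 = n ∧ (v : ℕ) = 0) := by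
  rw [Fin.val_sub] at h
  have hu := u.isLt
  have hv := v.isLt
  rcases Nat.lt_or_ge (n - u + v) n with hlt | hge
  · rw [Nat.mod_eq_of_lt hlt] at h
    omega
  · rw [Nat.mod_eq_sub_mod hge, Nat.mod_eq_of_lt (by omega)] at h
    omega

def gray (v : ℕ) : ℕ := v ^^^ v / 2

theorem gray_xor (a b : ℕ) : gray (a ^^^ b) = gray a ^^^ gray b := by
  simp only [gray, Nat.xor_div_two]
  ac_rfl

theorem gray_injective : Function.Injective gray := by
  intro a b h
  have h0 : gray (a ^^^ b) = 0 := by rw [gray_xor, h, Nat.xor_self]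
  have : a ^^^ b = (a ^^^ b) / 2 := xor_eq_zero_iff.mp h0
  exact xor_eq_zero_iff.mp (by omega)

theorem gray_lt_two_pow {k v : ℕ} (h : v < 2 ^ k) : gray v < 2 ^ k :=
  Nat.xor_lt_two_pow h ((Nat.div_le_self _ _).trans_lt h)

theorem gray_two_pow_sub_one (t : ℕ) : gray (2 ^ (t + 1) - 1) = 2 ^ t := by
  apply Nat.eq_of_testBit_eq
  intro j
  simp only [gray, Nat.testBit_xor, Nat.testBit_div_two, Nat.testBit_two_pow_sub_one,
    Nat.testBit_two_pow]
  by_cases h : j = t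
  · simp [h]
  · have : j + 1 < t + 1 ↔ j < t + 1 := by omega
    simp [this, Ne.symm h]

theorem gray_xor_gray_succ (u : ℕ) : ∃ t, gray u ^^^ gray (u + 1) = 2 ^ t := by
  obtain ⟨t, ht⟩ := Nat.exists_xor_succ_eq_two_pow_sub_one u
  exact ⟨t, by rw [← gray_xor, ht, gray_two_pow_sub_one]⟩

open Finset SimpleGraph

namespace SimpleGraph

def IsOneOneCovering {V ι : Type*} (G : SimpleGraph V) (A : ι → Finset V) : Prop :=
  ∀ ⦃u v⦄, G.Adj u v → ∀ ⦃x⦄, x ≠ u → x ≠ v → ∃ i, u ∈ A i ∧ v ∈ A i ∧ x ∉ A i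

variable {V ι : Type*} [Fintype V] [DecidableEq V] [Fintype ι] {G : SimpleGraph V}

theorem isCovering_one_one_iff {m : ℕ} {A : Fin m → Finset V} :
    IsCovering G 1 1 A ↔ G.IsOneOneCovering A := by
  simp only [IsCovering, IsOneOneCovering, card_eq_one, one_le_card]
  constructor
  · intro h u v huv x hxu hxv
    obtain ⟨i, hi⟩ := h u v huv {x} ⟨x, rfl⟩ (by simpa using hxu.symm) (by simpa using hxv.symm)
    exact ⟨i, by simpa using hi⟩
  · rintro h u v huv W ⟨x, rfl⟩ hu hv
    obtain ⟨i, hi⟩ := h huv (x := x) (by simpa [eq_comm] using hu) (by simpa [eq_comm] using hv)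
    exact ⟨i, by simpa using hi⟩

theorem IsOneOneCovering.exists_isCovering {A : ι → Finset V} (hA : G.IsOneOneCovering A) :
    ∃ B : Fin (Fintype.card ι) → Finset V, IsCovering G 1 1 B := by
  refine ⟨A ∘ (Fintype.equivFin ι).symm, isCovering_one_one_iff.mpr ?_⟩
  intro u v huv x hxu hxv
  obtain ⟨i, hi⟩ := hA huv hxu hxv
  exact ⟨Fintype.equivFin ι i, by simpa using hi⟩

theorem IsOneOneCovering.nGraphCov_le_card {A : ι → Finset V} (hA : G.IsOneOneCovering A) :
    NGraphCov G 1 1 ≤ Fintype.card ι :=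
  Nat.sInf_le hA.exists_isCovering

theorem isOneOneCovering_erase : G.IsOneOneCovering fun x : V => univ.erase x :=
  fun _ _ _ x hxu hxv => ⟨x, by simp [hxu.symm, hxv.symm]⟩

theorem card_le_choose_of_isOneOneCovering [DecidableRel G.Adj] (hG : ∀ x, 2 ≤ G.degree x)
    {A : ι → Finset V} (hA : G.IsOneOneCovering A) :
    Fintype.card V ≤ (Fintype.card ι).choose (Fintype.card ι / 2) := by
  classical
  set trace : V → Finset ι := fun x => univ.filter (x ∈ A ·)
  have htrace {x y : V} (hxy : x ≠ y) : ¬ trace x ⊆ trace y := by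
    obtain ⟨v, hv, hvy⟩ := exists_mem_ne (hG x) y
    obtain ⟨i, hxi, hvi, hyi⟩ := hA ((G.mem_neighborFinset x v).mp hv) hxy.symm hvy.symm
    exact fun h => hyi (mem_filter.mp (h (by simpa [trace] using hxi))).2
  have hinj : Function.Injective trace := fun x y h =>
    by_contra fun hxy => htrace hxy h.subset
  have hanti : IsAntichain (· ⊆ ·) (SetLike.coe (univ.image trace)) := by
    rw [coe_image, coe_univ, Set.image_univ]
    rintro _ ⟨x, rfl⟩ _ ⟨y, rfl⟩ hne
    exact htrace (fun h => hne (congrArg trace h))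
  simpa [card_image_of_injective _ hinj] using hanti.sperner

theorem rSperner_card_le_nGraphCov [DecidableRel G.Adj] (hG : ∀ x, 2 ≤ G.degree x) :
    RSperner (Fintype.card V) ≤ NGraphCov G 1 1 := by
  obtain ⟨A, hA⟩ : ∃ A : Fin (NGraphCov G 1 1) → Finset V, IsCovering G 1 1 A :=
    Nat.sInf_mem (s := {m | ∃ A : Fin m → Finset V, IsCovering G 1 1 A})
      ⟨_, isOneOneCovering_erase.exists_isCovering⟩
  exact Nat.sInf_le <| by
    simpa using card_le_choose_of_isOneOneCovering hG (isCovering_one_one_iff.mp hA)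

theorem two_le_degree_cycleGraph {n : ℕ} (hn : 3 ≤ n) (x : Fin n) :
    2 ≤ (cycleGraph n).degree x := by
  obtain ⟨m, rfl⟩ : ∃ m, n = m + 3 := ⟨n - 3, by omega⟩
  exact cycleGraph_degree_three_le.ge

def cycleCover (n k : ℕ) : Option (Fin k × Bool) → Finset (Fin n)
  | none => univ.filter fun v => (v : ℕ) = 0 ∨ (v : ℕ) = n - 1
  | some (j, b) => univ.filter fun v => (gray v).testBit j = b

theorem isOneOneCovering_cycleCover {n k : ℕ} (hnk : n ≤ 2 ^ k) :
    (cycleGraph n).IsOneOneCovering (cycleCover n k) := by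
  suffices h : ∀ ⦃u v x : Fin n⦄, (v - u).val = 1 → x ≠ u → x ≠ v →
      ∃ i, u ∈ cycleCover n k i ∧ v ∈ cycleCover n k i ∧ x ∉ cycleCover n k i by
    intro u v huv x hxu hxv
    rcases cycleGraph_adj'.mp huv with h' | h'
    · obtain ⟨i, hv, hu, hx⟩ := h h' hxv hxu
      exact ⟨i, hu, hv, hx⟩
    · exact h h' hxu hxv
  intro u v x huv hxu hxv
  rcases Fin.val_eq_succ_or_wrap_of_val_sub_eq_one huv with hv | ⟨hu, hv⟩
  · obtain ⟨t, ht⟩ := gray_xor_gray_succ u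
    rw [← hv] at ht
    obtain ⟨j, hj, hx⟩ := Nat.exists_testBit_eq_testBit_ne ht
      (gray_injective.ne (Fin.val_injective.ne hxu)) (gray_injective.ne (Fin.val_injective.ne hxv))
    have hjk : j < k := by
      by_contra! hkj
      have hbound (w : Fin n) : (gray w).testBit j = false :=
        Nat.testBit_eq_false_of_lt ((gray_lt_two_pow (w.isLt.trans_le hnk)).trans_le
          (Nat.pow_le_pow_right two_pos hkj))
      exact hx (by rw [hbound, hbound])
    exact ⟨some (⟨j, hjk⟩, (gray u).testBit j), by simp [cycleCover], by simp [cycleCover, hj],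
      by simpa [cycleCover] using hx⟩
  · refine ⟨none, ?_⟩
    simp only [cycleCover, mem_filter, mem_univ, true_and]
    omega

theorem nGraphCov_cycleGraph_le (n : ℕ) :
    NGraphCov (cycleGraph n) 1 1 ≤ 2 * Nat.clog 2 n + 1 := by
  simpa [mul_comm] using
    (isOneOneCovering_cycleCover (Nat.le_pow_clog one_lt_two n)).nGraphCov_le_card

end SimpleGraph

theorem stmt_16 (n : ℕ) (hn : 3 ≤ n) :
    RSperner n ≤ NGraphCov (SimpleGraph.cycleGraph n) 1 1 ∧
      NGraphCov (SimpleGraph.cycleGraph n) 1 1 ≤ 2 * Nat.clog 2 n + 1 :=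
  ⟨by simpa using rSperner_card_le_nGraphCov (two_le_degree_cycleGraph hn),
    nGraphCov_cycleGraph_le n⟩
end
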